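/- arXiv:0704.0036 — 3 statements merged into one kernel-verified Lean document; each statement's English description precedes it below -/
import Mathlib

section
/- Fix n even, γ > 0, and S > 0. For any choice of n+1 distinct positive reals u_1 < ... < u_{n+1} with product u_1···u_{n+1} = γ, there exist positive constants λ_i = 1, K_i > 0, and β_i > 0 (i = 0,...,n−1) such that the polynomial f(u) of the previous context equals (u − u_1)(u − u_2)···(u − u_{n+1}). In particular, f has n+1 distinct positive roots. -/
/-!
With all `λ_i = 1`, `f` is `X ^ (n + 1) - γ` plus, for each `i < n`, the monomial `X ^ (i + 1)`
with coefficient `1 - γ + (S / K_i) (1 - γ β_i)`. The target `∏ (X - u_i)` is monic of degree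
`n + 1` with constant term `(-1) ^ (n + 1) ∏ u_i = -γ` because `n` is even, so it remains to
realise each middle coefficient; this is possible because `S / K` ranges over `(0, ∞)` and
`1 - γ β` over `(-∞, 1)`.
-/

open Polynomial Finset

noncomputable def phi0 (lam : ℕ → ℝ) (n : ℕ) : Polynomial ℝ :=
  ∑ i ∈ range (n + 1), C (∏ j ∈ range i, lam j) * X ^ i

noncomputable def phi1 (lam K : ℕ → ℝ) (n : ℕ) : Polynomial ℝ :=
  ∑ i ∈ range n, C ((∏ j ∈ range i, lam j) / K i) * X ^ i

noncomputable def phi2 (lam L : ℕ → ℝ) (n : ℕ) : Polynomial ℝ :=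
  ∑ i ∈ range n, C ((∏ j ∈ range (i + 1), lam j) / L i) * X ^ (i + 1)

theorem Polynomial.Monic.eq_C_coeff_zero_add_sum_add_X_pow {R : Type*} [Semiring R] {p : R[X]}
    {n : ℕ} (hp : p.Monic) (hdeg : p.natDegree = n + 1) :
    p = C (p.coeff 0) + ∑ i ∈ range n, C (p.coeff (i + 1)) * X ^ (i + 1) + X ^ (n + 1) := by
  have hlead : p.coeff (n + 1) = 1 := hdeg ▸ hp.coeff_natDegree
  conv_lhs => rw [as_sum_range_C_mul_X_pow p, hdeg, sum_range_succ, sum_range_succ']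
  simp [hlead, add_comm]

theorem coeff_zero_prod_X_sub_C {R ι : Type*} [CommRing R] [Fintype ι] (u : ι → R) :
    (∏ i, (X - C (u i))).coeff 0 = (-1) ^ Fintype.card ι * ∏ i, u i := by
  simp [coeff_zero_eq_eval_zero, eval_prod, prod_neg]

theorem phi0_one (n : ℕ) : phi0 (fun _ => 1) n = ∑ i ∈ range (n + 1), X ^ i := by
  simp [phi0]

theorem phi1_one (K : ℕ → ℝ) (n : ℕ) :
    phi1 (fun _ => 1) K n = ∑ i ∈ range n, C (K i)⁻¹ * X ^ i := by
  simp [phi1]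

theorem phi2_one (L : ℕ → ℝ) (n : ℕ) :
    phi2 (fun _ => 1) L n = ∑ i ∈ range n, C (L i)⁻¹ * X ^ (i + 1) := by
  simp [phi2]

theorem phi_combination_eq_sum (n : ℕ) (γ S : ℝ) (K L : ℕ → ℝ) :
    X * phi0 (fun _ => 1) n + C S * (X * phi1 (fun _ => 1) K n - C γ * phi2 (fun _ => 1) L n)
        - C γ * phi0 (fun _ => 1) n
      = C (-γ) + ∑ i ∈ range n, C (1 - γ + S / K i - S * γ / L i) * X ^ (i + 1)
        + X ^ (n + 1) := by
  have hX : X * ∑ i ∈ range (n + 1), (X : ℝ[X]) ^ i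
      = ∑ i ∈ range n, X ^ (i + 1) + X ^ (n + 1) := by
    rw [sum_range_succ, mul_add, mul_sum]
    simp only [← pow_succ']
  have hγ : ∑ i ∈ range (n + 1), (X : ℝ[X]) ^ i = 1 + ∑ i ∈ range n, X ^ (i + 1) := by
    rw [sum_range_succ', pow_zero, add_comm]
  have hK : X * ∑ i ∈ range n, C (K i)⁻¹ * X ^ i
      = ∑ i ∈ range n, C (K i)⁻¹ * X ^ (i + 1) := by
    simp only [mul_sum, pow_succ, mul_left_comm X, mul_comm _ X]
  have hsummand : ∀ i, C (1 - γ + S / K i - S * γ / L i) * X ^ (i + 1)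
      = X ^ (i + 1) - C γ * X ^ (i + 1) + C S * (C (K i)⁻¹ * X ^ (i + 1))
        - C S * (C γ * (C (L i)⁻¹ * X ^ (i + 1))) := by
    intro i
    simp only [map_sub, map_add, map_one, map_mul, div_eq_mul_inv]
    ring
  rw [phi0_one, phi1_one, phi2_one, hK, hX, hγ]
  simp only [hsummand, sum_add_distrib, sum_sub_distrib, mul_add, mul_sub, mul_one, mul_sum,
    map_neg]
  ring

theorem exists_pos_div_mul_one_sub_mul_eq (c : ℝ) {S γ : ℝ} (hS : 0 < S) (hγ : 0 < γ) :
    ∃ K β : ℝ, 0 < K ∧ 0 < β ∧ S / K * (1 - γ * β) = c := by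
  have hd : 0 < 1 + |c| := by positivity
  have hc : c / (1 + |c|) < 1 := (div_lt_one hd).2 (by linarith [le_abs_self c])
  -- `S / K = 1 + |c|` forces `1 - γ β = c / (1 + |c|) < 1`.
  refine ⟨S / (1 + |c|), (1 - c / (1 + |c|)) / γ, by positivity,
    div_pos (by linarith) hγ, ?_⟩
  field_simp
  ring

theorem stmt7_general (n : ℕ) (hn : Even n) (γ S : ℝ) (hγ : 0 < γ) (hS : 0 < S)
    (u : Fin (n + 1) → ℝ)
    (hprod : ∏ i, u i = γ) :
    ∃ K β : ℕ → ℝ, (∀ i < n, 0 < K i ∧ 0 < β i) ∧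
      X * phi0 (fun _ => 1) n
        + C S * (X * phi1 (fun _ => 1) K n
            - C γ * phi2 (fun _ => 1) (fun i => K i / β i) n)
        - C γ * phi0 (fun _ => 1) n = ∏ i, (X - C (u i)) := by
  set p : ℝ[X] := ∏ i, (X - C (u i))
  have hmonic : p.Monic := monic_prod_of_monic _ _ fun i _ => monic_X_sub_C (u i)
  have hdeg : p.natDegree = n + 1 := by simp [p]
  have hcoeff0 : p.coeff 0 = -γ := by
    rw [coeff_zero_prod_X_sub_C, hprod, Fintype.card_fin, hn.add_one.neg_one_pow, neg_one_mul]
  choose K β hK hβ hKβ using fun i =>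
    exists_pos_div_mul_one_sub_mul_eq (p.coeff (i + 1) - 1 + γ) hS hγ
  have hcoeff : ∀ i, 1 - γ + S / K i - S * γ / (K i / β i) = p.coeff (i + 1) := by
    intro i
    rw [div_div_eq_mul_div]
    linear_combination hKβ i
  refine ⟨K, β, fun i _ => ⟨hK i, hβ i⟩, ?_⟩
  rw [phi_combination_eq_sum, hmonic.eq_C_coeff_zero_add_sum_add_X_pow hdeg, hcoeff0]
  simp only [hcoeff]

theorem stmt7 (n : ℕ) (hn : Even n) (γ S : ℝ) (hγ : 0 < γ) (hS : 0 < S)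
    (u : Fin (n + 1) → ℝ) (hpos : ∀ i, 0 < u i) (hmono : StrictMono u)
    (hprod : ∏ i, u i = γ) :
    ∃ K β : ℕ → ℝ, (∀ i < n, 0 < K i ∧ 0 < β i) ∧
      X * phi0 (fun _ => 1) n
        + C S * (X * phi1 (fun _ => 1) K n
            - C γ * phi2 (fun _ => 1) (fun i => K i / β i) n)
        - C γ * phi0 (fun _ => 1) n = ∏ i, (X - C (u i)) :=
  stmt7_general n hn γ S hγ hS u hprod
end

section
/- Let f(u) = c u^{n+1} + Σ_{i=1}^{n} b_i u^i − γ with c > 0, γ > 0, where b_i = λ_0···λ_{i-2}(1 + (S/K_{i-1})(1 − γβ_{i-1}) − γλ_{i-1}) as in the reduced steady-state polynomial. Suppose ū > 0 satisfies f(ū) = 0 and the condition S·|1 − γβ_j|/K_j ≤ 1/n holds for all j = 0, ..., n−1. Then f'(ū) > 0. -/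
open Polynomial Finset

/-!
Write `f = X A + B - γ A` with `A = φ₀ = ∑ aᵢ Xⁱ` and `B = ∑_{j<n} sⱼ X^(j+1)`, where
`sⱼ = S aⱼ (1 - γ βⱼ) / Kⱼ`. Eliminating `γ` through `γ A(ū) = ū A(ū) + B(ū)` gives
`A(ū) f'(ū) = A(ū)² + W(A, B)(ū)` with `W` the Wronskian, and `A(ū) > 0`. Expanding,
`A² + W(A, B) = ∑ᵢ aᵢ ūⁱ (aₙ ūⁿ + ∑_{j<n} (aⱼ + sⱼ (j + 1 - i)) ūʲ)`, and every bracket is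
nonnegative because the hypothesis says `n |sⱼ| ≤ aⱼ` while `|j + 1 - i| ≤ n`.
-/

namespace Polynomial

variable {R : Type*} [CommRing R]

theorem eval_mul_eval_derivative_of_eval_eq_zero {A B : R[X]} {γ u : R}
    (hf : (X * A + B - C γ * A).eval u = 0) :
    A.eval u * (X * A + B - C γ * A).derivative.eval u = A.eval u ^ 2 + (wronskian A B).eval u := by
  simp only [eval_sub, eval_add, eval_mul, eval_X, eval_C] at hf
  simp only [wronskian, derivative_sub, derivative_add, derivative_mul, derivative_X,
    derivative_C, eval_sub, eval_add, eval_mul, eval_X, eval_C, eval_one, eval_zero]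
  linear_combination A.derivative.eval u * hf

theorem wronskian_C_mul_X_pow_C_mul_X_pow_succ (a b : R) (i j : ℕ) :
    wronskian (C a * X ^ i) (C b * X ^ (j + 1)) = C (a * b * ((j : R) + 1 - i)) * X ^ (i + j) := by
  cases i with
  | zero =>
    simp only [wronskian, derivative_C_mul_X_pow, pow_zero, mul_one, derivative_C, zero_mul,
      sub_zero, Nat.add_sub_cancel, Nat.cast_zero, C_mul, ← Nat.cast_succ, C_eq_natCast]
    push_cast
    ring
  | succ i =>
    simp only [wronskian, derivative_C_mul_X_pow, Nat.add_sub_cancel, C_mul, C_sub,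
      ← Nat.cast_succ, C_eq_natCast]
    push_cast
    ring

theorem wronskian_sum_sum {ι κ : Type*} (s : Finset ι) (t : Finset κ) (p : ι → R[X])
    (q : κ → R[X]) :
    wronskian (∑ i ∈ s, p i) (∑ j ∈ t, q j) = ∑ i ∈ s, ∑ j ∈ t, wronskian (p i) (q j) := by
  simp only [← wronskianBilin_apply, map_sum, LinearMap.sum_apply]
  exact sum_comm

end Polynomial

theorem le_add_mul_of_abs_mul_le {a s c : ℝ} {n : ℕ} (hs : |s| * n ≤ a) (hc : |c| ≤ n) :
    0 ≤ a + s * c := by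
  have : |s * c| ≤ a := by
    rw [abs_mul]
    exact (mul_le_mul_of_nonneg_left hc (abs_nonneg s)).trans hs
  linarith [neg_abs_le (s * c)]

theorem sq_add_sum_sum_pos {n : ℕ} {a s : ℕ → ℝ} {u : ℝ} (ha : ∀ i ≤ n, 0 < a i)
    (hs : ∀ j < n, |s j| * n ≤ a j) (hu : 0 < u) :
    0 < (∑ i ∈ range (n + 1), a i * u ^ i) ^ 2
      + ∑ i ∈ range (n + 1), ∑ j ∈ range n, a i * s j * ((j : ℝ) + 1 - i) * u ^ (i + j) := by
  have hsplit : (∑ i ∈ range (n + 1), a i * u ^ i) ^ 2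
      + ∑ i ∈ range (n + 1), ∑ j ∈ range n, a i * s j * ((j : ℝ) + 1 - i) * u ^ (i + j)
      = ∑ i ∈ range (n + 1), a i * u ^ i *
          (a n * u ^ n + ∑ j ∈ range n, (a j + s j * ((j : ℝ) + 1 - i)) * u ^ j) := by
    rw [sq, sum_mul, ← sum_add_distrib]
    refine sum_congr rfl fun i _ => ?_
    have hinner : ∑ j ∈ range n, (a j + s j * ((j : ℝ) + 1 - i)) * u ^ j
        = ∑ j ∈ range n, a j * u ^ j + ∑ j ∈ range n, s j * ((j : ℝ) + 1 - i) * u ^ j := by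
      rw [← sum_add_distrib]
      exact sum_congr rfl fun j _ => by ring
    have hfactor : ∑ j ∈ range n, a i * s j * ((j : ℝ) + 1 - i) * u ^ (i + j)
        = a i * u ^ i * ∑ j ∈ range n, s j * ((j : ℝ) + 1 - i) * u ^ j := by
      rw [mul_sum]
      exact sum_congr rfl fun j _ => by ring
    rw [sum_range_succ, hinner, hfactor]
    ring
  rw [hsplit]
  refine sum_pos (fun i hi => mul_pos (mul_pos (ha i (by grind)) (pow_pos hu i)) ?_)
    ⟨0, by simp⟩
  refine add_pos_of_pos_of_nonneg (mul_pos (ha n le_rfl) (pow_pos hu n)) ?_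
  refine sum_nonneg fun j hj => mul_nonneg ?_ (pow_pos hu j).le
  have hj : j < n := mem_range.mp hj
  refine le_add_mul_of_abs_mul_le (hs j hj) (abs_le.mpr ⟨?_, ?_⟩)
  · have : i ≤ n := by grind
    have : (i : ℝ) ≤ n := by exact_mod_cast this
    linarith
  · have : (j : ℝ) + 1 ≤ n := by exact_mod_cast hj
    linarith [(i.cast_nonneg : (0 : ℝ) ≤ i)]

theorem eval_derivative_pos_of_eval_eq_zero {n : ℕ} {a s : ℕ → ℝ} {γ u : ℝ}
    (ha : ∀ i ≤ n, 0 < a i) (hs : ∀ j < n, |s j| * n ≤ a j) (hu : 0 < u)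
    (hf : (X * ∑ i ∈ range (n + 1), C (a i) * X ^ i + ∑ j ∈ range n, C (s j) * X ^ (j + 1)
      - C γ * ∑ i ∈ range (n + 1), C (a i) * X ^ i).eval u = 0) :
    0 < (X * ∑ i ∈ range (n + 1), C (a i) * X ^ i + ∑ j ∈ range n, C (s j) * X ^ (j + 1)
      - C γ * ∑ i ∈ range (n + 1), C (a i) * X ^ i).derivative.eval u := by
  have hA : (∑ i ∈ range (n + 1), C (a i) * X ^ i).eval u = ∑ i ∈ range (n + 1), a i * u ^ i := by
    simp [eval_finsetSum]
  have hW : (wronskian (∑ i ∈ range (n + 1), C (a i) * X ^ i)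
      (∑ j ∈ range n, C (s j) * X ^ (j + 1))).eval u
      = ∑ i ∈ range (n + 1), ∑ j ∈ range n, a i * s j * ((j : ℝ) + 1 - i) * u ^ (i + j) := by
    simp [wronskian_sum_sum, wronskian_C_mul_X_pow_C_mul_X_pow_succ, eval_finsetSum]
  have hA_pos : 0 < ∑ i ∈ range (n + 1), a i * u ^ i :=
    sum_pos (fun i hi => mul_pos (ha i (by grind)) (pow_pos hu i)) ⟨0, by simp⟩
  refine pos_of_mul_pos_right ?_ hA_pos.le
  rw [← hA, eval_mul_eval_derivative_of_eval_eq_zero hf, hA, hW]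
  exact sq_add_sum_sum_pos ha hs hu

theorem C_mul_X_mul_phi1_sub_C_mul_phi2 {n : ℕ} {lam K β : ℕ → ℝ} (γ S : ℝ)
    (hlam : ∀ i < n, lam i ≠ 0) :
    C S * (X * phi1 lam K n - C γ * phi2 lam (fun i => lam i * K i / β i) n)
      = ∑ j ∈ range n, C (S * ((∏ k ∈ range j, lam k) / K j) * (1 - γ * β j)) * X ^ (j + 1) := by
  rw [phi1, phi2, mul_sum, mul_sum, ← sum_sub_distrib, mul_sum]
  refine sum_congr rfl fun j hj => ?_
  have hcoeff : (∏ k ∈ range (j + 1), lam k) / (lam j * K j / β j)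
      = (∏ k ∈ range j, lam k) / K j * β j := by
    rw [prod_range_succ, div_div_eq_mul_div]
    field_simp [hlam j (mem_range.mp hj)]
  rw [hcoeff]
  simp only [C_mul, C_sub, C_1]
  ring

theorem stmt9_general (n : ℕ) (lam K β : ℕ → ℝ) (γ S : ℝ)
    (hlam : ∀ i < n, 0 < lam i) (hK : ∀ i < n, 0 < K i)
    (hS : 0 < S)
    (hcond : ∀ j < n, S * |1 - γ * β j| / K j ≤ 1 / n) :
    let f := X * phi0 lam n
      + C S * (X * phi1 lam K n - C γ * phi2 lam (fun i => lam i * K i / β i) n)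
      - C γ * phi0 lam n
    ∀ ubar : ℝ, 0 < ubar → f.eval ubar = 0 → 0 < f.derivative.eval ubar := by
  intro f u hu hf
  have ha : ∀ i ≤ n, 0 < ∏ k ∈ range i, lam k := fun i hi =>
    prod_pos fun k hk => hlam k (by grind)
  have hs : ∀ j < n, |S * ((∏ k ∈ range j, lam k) / K j) * (1 - γ * β j)| * n
      ≤ ∏ k ∈ range j, lam k := by
    intro j hj
    have hn : (0 : ℝ) < n := Nat.cast_pos.mpr (j.zero_le.trans_lt hj)
    calc |S * ((∏ k ∈ range j, lam k) / K j) * (1 - γ * β j)| * n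
        = (∏ k ∈ range j, lam k) * (S * |1 - γ * β j| / K j) * n := by
          rw [abs_mul, abs_mul, abs_of_pos hS, abs_of_pos (div_pos (ha j hj.le) (hK j hj))]
          ring
      _ ≤ (∏ k ∈ range j, lam k) * (1 / n) * n :=
          mul_le_mul_of_nonneg_right (mul_le_mul_of_nonneg_left (hcond j hj) (ha j hj.le).le) hn.le
      _ = ∏ k ∈ range j, lam k := by field_simp
  simp only [f, C_mul_X_mul_phi1_sub_C_mul_phi2 γ S fun i hi => (hlam i hi).ne'] at hf ⊢
  exact eval_derivative_pos_of_eval_eq_zero ha hs hu hf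

theorem stmt9 (n : ℕ) (lam K β : ℕ → ℝ) (γ S : ℝ)
    (hlam : ∀ i < n, 0 < lam i) (hK : ∀ i < n, 0 < K i) (hβ : ∀ i < n, 0 < β i)
    (hγ : 0 < γ) (hS : 0 < S)
    (hcond : ∀ j < n, S * |1 - γ * β j| / K j ≤ 1 / n) :
    let f := X * phi0 lam n
      + C S * (X * phi1 lam K n - C γ * phi2 lam (fun i => lam i * K i / β i) n)
      - C γ * phi0 lam n
    ∀ ubar : ℝ, 0 < ubar → f.eval ubar = 0 → 0 < f.derivative.eval ubar :=
  stmt9_general n lam K β γ S hlam hK hS hcond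
end

section
/- Let φ_0, φ_1, φ_2 be the polynomials of the futile cycle (φ_0 of degree n with positive coefficients and constant term 1; φ_1 of degree n−1 with positive coefficients; φ_2 of degree n with positive coefficients and zero constant term). For positive parameters E, F, S define P(u) = φ_0(u)φ_2(u)(E/F − u)² + (φ_0(u) − Sφ_2(u) + F u φ_1(u) + F φ_2(u))(E/F − u)(uφ_1(u) − (E/F)φ_2(u)) − S(uφ_1(u) − (E/F)φ_2(u))². Then P is divisible by u, the quotient Q(u) = P(u)/u is a polynomial of degree 2n+1 with leading coefficient (λ_0···λ_{n-1})²/L_{n-1} > 0 and constant term (E/F)·(1/K_0) > 0. In particular, Q has at most 2n positive real roots. -/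
/-! With `c = E / F` and `φ₂ = u ψ`, the polynomial `P` is `u` times
`Q = φ₀ ψ (u - c)² + A (c - u) (φ₁ - c ψ) - S u (φ₁ - c ψ)²`, where `A = φ₀ - S φ₂ + F u φ₁ + F φ₂`.
The first summand has degree `2n + 1` and leading coefficient `Λₙ · Λₙ / L_{n-1}`, the other two
have degree at most `2n`, and at `u = 0` only `c φ₀(0) φ₁(0) = c / K₀` survives. Being of odd
degree with positive leading coefficient and positive constant term, `Q` changes sign on
`(-∞, 0)`, so one of its `2n + 1` roots is negative. -/

open Polynomial Finset

section SumRange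

variable {R : Type*} [Semiring R] (a : ℕ → R) (m : ℕ)

theorem coeff_sum_range_C_mul_X_pow (k : ℕ) :
    (∑ i ∈ range m, C (a i) * X ^ i).coeff k = if k < m then a k else 0 := by
  simp only [finsetSum_coeff, coeff_C_mul, coeff_X_pow, mul_ite, mul_one, mul_zero,
    Finset.sum_ite_eq, mem_range]

theorem natDegree_sum_range_C_mul_X_pow_le :
    (∑ i ∈ range (m + 1), C (a i) * X ^ i).natDegree ≤ m := by
  rw [natDegree_le_iff_coeff_eq_zero]
  intro k hk
  rw [coeff_sum_range_C_mul_X_pow, if_neg (by omega)]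

variable {a m}

theorem natDegree_sum_range_C_mul_X_pow (ha : a m ≠ 0) :
    (∑ i ∈ range (m + 1), C (a i) * X ^ i).natDegree = m := by
  refine natDegree_eq_of_le_of_coeff_ne_zero (natDegree_sum_range_C_mul_X_pow_le a m) ?_
  rwa [coeff_sum_range_C_mul_X_pow, if_pos m.lt_succ_self]

theorem leadingCoeff_sum_range_C_mul_X_pow (ha : a m ≠ 0) :
    (∑ i ∈ range (m + 1), C (a i) * X ^ i).leadingCoeff = a m := by
  rw [leadingCoeff, natDegree_sum_range_C_mul_X_pow ha, coeff_sum_range_C_mul_X_pow,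
    if_pos m.lt_succ_self]

end SumRange

section FutileQuotient

variable {R : Type*} [CommRing R] (φ0 φ1 ψ : R[X]) (c F S : R)

noncomputable def futileQuotient : R[X] :=
  φ0 * ψ * (X - C c) ^ 2
    + ((φ0 - C S * (X * ψ) + C F * X * φ1 + C F * (X * ψ)) * (C c - X) * (φ1 - C c * ψ)
      - C S * X * (φ1 - C c * ψ) ^ 2)

theorem futile_eq_X_mul_futileQuotient :
    φ0 * (X * ψ) * (C c - X) ^ 2
      + (φ0 - C S * (X * ψ) + C F * X * φ1 + C F * (X * ψ)) * (C c - X)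
          * (X * φ1 - C c * (X * ψ))
      - C S * (X * φ1 - C c * (X * ψ)) ^ 2
      = X * futileQuotient φ0 φ1 ψ c F S := by
  rw [futileQuotient]; ring

theorem coeff_zero_futileQuotient :
    (futileQuotient φ0 φ1 ψ c F S).coeff 0 = c * φ0.coeff 0 * φ1.coeff 0 := by
  simp only [futileQuotient, mul_coeff_zero, coeff_add, coeff_sub, coeff_C_zero, coeff_X_zero,
    pow_two]
  ring

variable {φ0 φ1 ψ} {m : ℕ}

theorem natDegree_futileQuotient_tail_le (h0 : φ0.natDegree ≤ m + 1) (hψ : ψ.natDegree ≤ m)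
    (h1 : φ1.natDegree ≤ m) :
    ((φ0 - C S * (X * ψ) + C F * X * φ1 + C F * (X * ψ)) * (C c - X) * (φ1 - C c * ψ)
      - C S * X * (φ1 - C c * ψ) ^ 2).natDegree ≤ 2 * m + 2 := by
  have hX : (X : R[X]).natDegree ≤ 1 := natDegree_X_le
  have hCX : ∀ a : R, (C a * X).natDegree ≤ 1 := fun a => (natDegree_C_mul_le a X).trans hX
  have hXψ : (X * ψ).natDegree ≤ m + 1 := by
    simpa [add_comm] using natDegree_mul_le_of_le hX hψ
  have hA : (φ0 - C S * (X * ψ) + C F * X * φ1 + C F * (X * ψ)).natDegree ≤ m + 1 := by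
    refine natDegree_add_le_of_degree_le (natDegree_add_le_of_degree_le
      ((natDegree_sub_le _ _).trans (max_le h0 ((natDegree_C_mul_le _ _).trans hXψ))) ?_)
      ((natDegree_C_mul_le _ _).trans hXψ)
    simpa [add_comm] using natDegree_mul_le_of_le (hCX F) h1
  have hB : (φ1 - C c * ψ).natDegree ≤ m :=
    (natDegree_sub_le _ _).trans (max_le h1 ((natDegree_C_mul_le _ _).trans hψ))
  have hcX : (C c - X).natDegree ≤ 1 :=
    natDegree_sub_le_of_le (natDegree_C c).le hX
  refine (natDegree_sub_le _ _).trans (max_le ?_ ?_)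
  · have := natDegree_mul_le_of_le (natDegree_mul_le_of_le hA hcX) hB
    omega
  · have := natDegree_mul_le_of_le (hCX S) (natDegree_pow_le_of_le 2 hB)
    omega

variable [IsDomain R]

theorem natDegree_futileQuotient_head (h0 : φ0.natDegree = m + 1) (hψ : ψ.natDegree = m)
    (hψ0 : ψ ≠ 0) : (φ0 * ψ * (X - C c) ^ 2).natDegree = 2 * m + 3 := by
  have hφ0 : φ0 ≠ 0 := by rintro rfl; simp at h0
  rw [natDegree_mul (mul_ne_zero hφ0 hψ0) ((monic_X_sub_C c).pow 2).ne_zero,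
    natDegree_mul hφ0 hψ0, h0, hψ, natDegree_pow, natDegree_X_sub_C]
  ring

theorem natDegree_futileQuotient_tail_lt_head (h0 : φ0.natDegree = m + 1)
    (hψ : ψ.natDegree = m) (hψ0 : ψ ≠ 0) (h1 : φ1.natDegree ≤ m) :
    ((φ0 - C S * (X * ψ) + C F * X * φ1 + C F * (X * ψ)) * (C c - X) * (φ1 - C c * ψ)
      - C S * X * (φ1 - C c * ψ) ^ 2).natDegree < (φ0 * ψ * (X - C c) ^ 2).natDegree := by
  rw [natDegree_futileQuotient_head c h0 hψ hψ0]
  exact (natDegree_futileQuotient_tail_le c F S h0.le hψ.le h1).trans_lt (by omega)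

theorem natDegree_futileQuotient (h0 : φ0.natDegree = m + 1) (hψ : ψ.natDegree = m)
    (hψ0 : ψ ≠ 0) (h1 : φ1.natDegree ≤ m) :
    (futileQuotient φ0 φ1 ψ c F S).natDegree = 2 * m + 3 := by
  rw [futileQuotient, natDegree_add_eq_left_of_natDegree_lt
    (natDegree_futileQuotient_tail_lt_head c F S h0 hψ hψ0 h1),
    natDegree_futileQuotient_head c h0 hψ hψ0]

theorem leadingCoeff_futileQuotient (h0 : φ0.natDegree = m + 1) (hψ : ψ.natDegree = m)
    (hψ0 : ψ ≠ 0) (h1 : φ1.natDegree ≤ m) :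
    (futileQuotient φ0 φ1 ψ c F S).leadingCoeff = φ0.leadingCoeff * ψ.leadingCoeff := by
  rw [futileQuotient, leadingCoeff_add_of_degree_lt'
    (degree_lt_degree (natDegree_futileQuotient_tail_lt_head c F S h0 hψ hψ0 h1)),
    leadingCoeff_mul, leadingCoeff_mul, ((monic_X_sub_C c).pow 2).leadingCoeff, mul_one]

end FutileQuotient

theorem card_roots_filter_lt_natDegree {R : Type*} [CommRing R] [IsDomain R] {p : R[X]}
    (hp : p ≠ 0) (q : R → Prop) [DecidablePred q] {r : R} (hr : p.IsRoot r) (hqr : ¬ q r) :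
    Multiset.card (p.roots.filter q) < p.natDegree := by
  have hlt : p.roots.filter q < p.roots :=
    (Multiset.filter_le q _).lt_of_ne fun h =>
      hqr (Multiset.filter_eq_self.mp h r ((mem_roots hp).mpr hr))
  exact (Multiset.card_lt_card hlt).trans_le (card_roots' p)

theorem exists_neg_isRoot_of_odd_natDegree {p : ℝ[X]} (hodd : Odd p.natDegree)
    (hlc : 0 < p.leadingCoeff) (h0 : 0 < p.coeff 0) : ∃ r < 0, p.IsRoot r := by
  have hlc' : (p.comp (-X)).leadingCoeff = -p.leadingCoeff := by
    rw [leadingCoeff_comp (by simp), leadingCoeff_neg, leadingCoeff_X, hodd.neg_one_pow,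
      mul_neg_one]
  have hpos : 0 < (p.comp (-X)).degree := natDegree_pos_iff_degree_pos.mp <| by
    simpa [natDegree_comp] using hodd.pos
  obtain ⟨x, hx, hx0⟩ := ((tendsto_atBot_of_leadingCoeff_nonpos _ hpos (by linarith)).eventually
    (Filter.eventually_lt_atBot 0) |>.and (Filter.eventually_ge_atTop 0)).exists
  rw [eval_comp, eval_neg, eval_X] at hx
  obtain ⟨r, ⟨-, hr⟩, hroot⟩ := intermediate_value_Ico (neg_nonpos.mpr hx0)
    p.continuous.continuousOn ⟨hx.le, by rwa [← coeff_zero_eq_eval_zero]⟩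
  exact ⟨r, hr, hroot⟩

noncomputable def psi2 (lam L : ℕ → ℝ) (n : ℕ) : Polynomial ℝ :=
  ∑ i ∈ range n, C ((∏ j ∈ range (i + 1), lam j) / L i) * X ^ i

theorem phi2_eq_X_mul_psi2 (lam L : ℕ → ℝ) (n : ℕ) : phi2 lam L n = X * psi2 lam L n := by
  simp only [phi2, psi2, Finset.mul_sum, pow_succ]
  exact Finset.sum_congr rfl fun i _ => by ring

theorem coeff_zero_phi0 (lam : ℕ → ℝ) (n : ℕ) : (phi0 lam n).coeff 0 = 1 := by
  rw [phi0, coeff_sum_range_C_mul_X_pow, if_pos n.succ_pos, prod_range_zero]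

theorem coeff_zero_phi1 (lam K : ℕ → ℝ) (n : ℕ) : (phi1 lam K (n + 1)).coeff 0 = 1 / K 0 := by
  rw [phi1, coeff_sum_range_C_mul_X_pow, if_pos n.succ_pos, prod_range_zero]

theorem natDegree_phi0 {lam : ℕ → ℝ} {n : ℕ} (h : ∏ j ∈ range n, lam j ≠ 0) :
    (phi0 lam n).natDegree = n :=
  natDegree_sum_range_C_mul_X_pow h

theorem leadingCoeff_phi0 {lam : ℕ → ℝ} {n : ℕ} (h : ∏ j ∈ range n, lam j ≠ 0) :
    (phi0 lam n).leadingCoeff = ∏ j ∈ range n, lam j :=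
  leadingCoeff_sum_range_C_mul_X_pow h

theorem natDegree_phi1_le (lam K : ℕ → ℝ) (n : ℕ) : (phi1 lam K (n + 1)).natDegree ≤ n :=
  natDegree_sum_range_C_mul_X_pow_le _ n

theorem natDegree_psi2 {lam L : ℕ → ℝ} {n : ℕ} (h : (∏ j ∈ range (n + 1), lam j) / L n ≠ 0) :
    (psi2 lam L (n + 1)).natDegree = n :=
  natDegree_sum_range_C_mul_X_pow (a := fun i => (∏ j ∈ range (i + 1), lam j) / L i) h

theorem leadingCoeff_psi2 {lam L : ℕ → ℝ} {n : ℕ} (h : (∏ j ∈ range (n + 1), lam j) / L n ≠ 0) :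
    (psi2 lam L (n + 1)).leadingCoeff = (∏ j ∈ range (n + 1), lam j) / L n :=
  leadingCoeff_sum_range_C_mul_X_pow (a := fun i => (∏ j ∈ range (i + 1), lam j) / L i) h

theorem stmt10_general (n : ℕ) (hn : 0 < n) (lam K L : ℕ → ℝ)
    (hlam : ∀ i < n, 0 < lam i) (hK : ∀ i < n, 0 < K i) (hL : ∀ i < n, 0 < L i)
    (E F S : ℝ) (hE : 0 < E) (hF : 0 < F) :
    let φ0 := phi0 lam n
    let φ1 := phi1 lam K n
    let φ2 := phi2 lam L n
    let P := φ0 * φ2 * (C (E / F) - X) ^ 2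
      + (φ0 - C S * φ2 + C F * X * φ1 + C F * φ2) * (C (E / F) - X)
          * (X * φ1 - C (E / F) * φ2)
      - C S * (X * φ1 - C (E / F) * φ2) ^ 2
    ∃ Q : Polynomial ℝ, P = X * Q ∧ Q.natDegree = 2 * n + 1 ∧
      Q.leadingCoeff = (∏ j ∈ range n, lam j) ^ 2 / L (n - 1) ∧ 0 < Q.leadingCoeff ∧
      Q.coeff 0 = (E / F) * (1 / K 0) ∧ 0 < Q.coeff 0 ∧
      Multiset.card (Q.roots.filter (fun x => 0 < x)) ≤ 2 * n := by
  intro φ0 φ1 φ2 P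
  obtain ⟨m, rfl⟩ := Nat.exists_eq_add_one_of_ne_zero hn.ne'
  have hΛ : 0 < ∏ j ∈ range (m + 1), lam j := prod_pos fun j hj => hlam j (mem_range.mp hj)
  have hψlc : (∏ j ∈ range (m + 1), lam j) / L m ≠ 0 := (div_pos hΛ (hL m m.lt_succ_self)).ne'
  have hψ0 : psi2 lam L (m + 1) ≠ 0 := leadingCoeff_ne_zero.mp (leadingCoeff_psi2 hψlc ▸ hψlc)
  set Q := futileQuotient φ0 φ1 (psi2 lam L (m + 1)) (E / F) F S
  have hdeg : Q.natDegree = 2 * (m + 1) + 1 :=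
    natDegree_futileQuotient _ _ _ (natDegree_phi0 hΛ.ne') (natDegree_psi2 hψlc) hψ0
      (natDegree_phi1_le lam K m)
  have hlc : Q.leadingCoeff = (∏ j ∈ range (m + 1), lam j) ^ 2 / L m := by
    rw [leadingCoeff_futileQuotient _ _ _ (natDegree_phi0 hΛ.ne') (natDegree_psi2 hψlc) hψ0
      (natDegree_phi1_le lam K m), leadingCoeff_phi0 hΛ.ne', leadingCoeff_psi2 hψlc]
    ring
  have hc0 : Q.coeff 0 = E / F * (1 / K 0) := by
    rw [coeff_zero_futileQuotient, coeff_zero_phi0, coeff_zero_phi1, mul_one]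
  have hlcpos : 0 < Q.leadingCoeff := hlc ▸ div_pos (pow_pos hΛ 2) (hL m m.lt_succ_self)
  have hc0pos : 0 < Q.coeff 0 := hc0 ▸ mul_pos (div_pos hE hF) (one_div_pos.mpr (hK 0 hn))
  refine ⟨Q, ?_, hdeg, by rwa [Nat.add_sub_cancel], hlcpos, hc0, hc0pos, ?_⟩
  · simp only [P, φ2, phi2_eq_X_mul_psi2]
    exact futile_eq_X_mul_futileQuotient _ _ _ _ _ _
  · obtain ⟨r, hr, hroot⟩ := exists_neg_isRoot_of_odd_natDegree
      (hdeg ▸ odd_two_mul_add_one _) hlcpos hc0pos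
    have := card_roots_filter_lt_natDegree (leadingCoeff_ne_zero.mp hlcpos.ne')
      (fun x => 0 < x) hroot hr.asymm
    omega

theorem stmt10 (n : ℕ) (hn : 0 < n) (lam K L : ℕ → ℝ)
    (hlam : ∀ i < n, 0 < lam i) (hK : ∀ i < n, 0 < K i) (hL : ∀ i < n, 0 < L i)
    (E F S : ℝ) (hE : 0 < E) (hF : 0 < F) (hS : 0 < S) :
    let φ0 := phi0 lam n
    let φ1 := phi1 lam K n
    let φ2 := phi2 lam L n
    let P := φ0 * φ2 * (C (E / F) - X) ^ 2
      + (φ0 - C S * φ2 + C F * X * φ1 + C F * φ2) * (C (E / F) - X)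
          * (X * φ1 - C (E / F) * φ2)
      - C S * (X * φ1 - C (E / F) * φ2) ^ 2
    ∃ Q : Polynomial ℝ, P = X * Q ∧ Q.natDegree = 2 * n + 1 ∧
      Q.leadingCoeff = (∏ j ∈ range n, lam j) ^ 2 / L (n - 1) ∧ 0 < Q.leadingCoeff ∧
      Q.coeff 0 = (E / F) * (1 / K 0) ∧ 0 < Q.coeff 0 ∧
      Multiset.card (Q.roots.filter (fun x => 0 < x)) ≤ 2 * n :=
  stmt10_general n hn lam K L hlam hK hL E F S hE hF
end
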